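/- arXiv:2405.02928 — 5 statements merged into one kernel-verified Lean document; each statement's English description precedes it below -/
import Mathlib

section
/- For the PCA on the N-cycle with irreducible local transition matrix T of period d, every configuration in S := C_0^{⊗N} ∪ ... ∪ C_{d-1}^{⊗N} is a periodic state of the global Markov chain with period exactly d, where C_0,...,C_{d-1} are the cyclic classes of T. -/
/-!
Starting from a configuration in `C_r^N`, every positive-probability step of the global chain
moves each coordinate to the next cyclic class (some neighbour makes a `T`-transition into it),
so return times are multiples of `d`. Conversely, since every node belongs to its own
neighbourhood, `P(x, y) > 0` as soon as `T(x_n, y_n) > 0` for all `n`; hence `x` returns at every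
time `m` at which all of its coordinates return under `T`. The return times of a state under a
nonnegative matrix form an additive submonoid of `ℕ`, which contains every large multiple of its
gcd (`Nat.exists_mem_closure_of_ge`); so all large multiples of `d` are return times of `x`.
-/

open Matrix Finset MeasureTheory

/-- A row-stochastic matrix: nonnegative entries, each row sums to 1. -/
def RowStochastic {S : Type*} [Fintype S] (T : Matrix S S ℝ) : Prop :=
  (∀ j k, 0 ≤ T j k) ∧ ∀ j, ∑ k, T j k = 1

/-- Irreducibility of a nonnegative matrix: every state reaches every state. -/
def MatIrreducible {S : Type*} [Fintype S] [DecidableEq S] (T : Matrix S S ℝ) : Prop :=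
  ∀ i j, ∃ t : ℕ, 0 < (T ^ t) i j

/-- `d` is the period of state `i`: the gcd of the set of positive return times. -/
def IsGcdPeriod {S : Type*} [Fintype S] [DecidableEq S] (T : Matrix S S ℝ) (i : S) (d : ℕ) : Prop :=
  (∀ m : ℕ, 0 < m → 0 < (T ^ m) i i → d ∣ m) ∧
    ∀ e : ℕ, (∀ m : ℕ, 0 < m → 0 < (T ^ m) i i → e ∣ m) → e ∣ d

/-- The neighborhood of node `n` on the `N`-cycle: all nodes within cyclic distance `nv`. -/
def nbhd (N nv : ℕ) (n : Fin N) : Finset (Fin N) :=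
  Finset.univ.filter fun i => (n.val + N - i.val) % N ≤ nv ∨ (i.val + N - n.val) % N ≤ nv

/-- The PCA global transition matrix on configurations. -/
noncomputable def pcaP (N K nv : ℕ) (T : Matrix (Fin K) (Fin K) ℝ) :
    Matrix (Fin N → Fin K) (Fin N → Fin K) ℝ :=
  Matrix.of fun x y =>
    ∏ n : Fin N, (((nbhd N nv n).card : ℝ)⁻¹ * ∑ i ∈ nbhd N nv n, T (x i) (y n))

/-- Cyclic class decomposition of `[K]` for `T` with period `d`. -/
def CyclicClasses {K : ℕ} (T : Matrix (Fin K) (Fin K) ℝ) (d : ℕ)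
    (C : ℕ → Finset (Fin K)) : Prop :=
  (∀ r, C (r + d) = C r) ∧ (∀ k : Fin K, ∃! r : ℕ, r < d ∧ k ∈ C r) ∧
    ∀ j k, 0 < T j k → ∃ r, j ∈ C r ∧ k ∈ C (r + 1)

open Filter

section NonnegMatrix

variable {S : Type*} [Fintype S] [DecidableEq S] {A : Matrix S S ℝ}

namespace Matrix

lemma pow_apply_pos_add (hA : ∀ i j, 0 ≤ A i j) {a b : ℕ} {i j k : S}
    (ha : 0 < (A ^ a) i j) (hb : 0 < (A ^ b) j k) : 0 < (A ^ (a + b)) i k := by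
  rw [pow_add, mul_apply]
  exact (mul_pos ha hb).trans_le <| Finset.single_le_sum
    (f := fun u => (A ^ a) i u * (A ^ b) u k)
    (fun u _ => mul_nonneg (pow_apply_nonneg hA a i u) (pow_apply_nonneg hA b u k))
    (Finset.mem_univ j)

lemma exists_pos_of_pow_succ_apply_pos (hA : ∀ i j, 0 ≤ A i j) {m : ℕ} {i k : S}
    (h : 0 < (A ^ (m + 1)) i k) : ∃ j, 0 < (A ^ m) i j ∧ 0 < A j k := by
  rw [pow_succ, mul_apply] at h
  obtain ⟨j, -, hj⟩ := Finset.exists_ne_zero_of_sum_ne_zero h.ne'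
  obtain ⟨hij, hjk⟩ := mul_ne_zero_iff.mp hj
  exact ⟨j, (pow_apply_nonneg hA m i j).lt_of_ne' hij, (hA j k).lt_of_ne' hjk⟩

lemma pow_apply_pos_induction (hA : ∀ i j, 0 ≤ A i j) {P : ℕ → S → Prop}
    (hstep : ∀ s u v, P s u → 0 < A u v → P (s + 1) v) {r : ℕ} {i : S} (hi : P r i) :
    ∀ {m : ℕ} {j : S}, 0 < (A ^ m) i j → P (r + m) j
  | 0, j, h => by
    obtain rfl : i = j := by_contra fun hij => h.ne' (by simp [one_apply_ne hij])
    exact hi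
  | m + 1, _, h =>
    have ⟨_, him, hjk⟩ := exists_pos_of_pow_succ_apply_pos hA h
    hstep _ _ _ (pow_apply_pos_induction hA hstep hi him) hjk

end Matrix

lemma IsGcdPeriod.eventually_pow_apply_pos {i : S} {d : ℕ} (hA : ∀ i j, 0 ≤ A i j)
    (h : IsGcdPeriod A i d) :
    ∀ᶠ m in atTop, d ∣ m → 0 < (A ^ m) i i := by
  let returns : AddSubmonoid ℕ :=
    { carrier := {m | 0 < (A ^ m) i i}
      zero_mem' := by simp
      add_mem' := pow_apply_pos_add hA }
  have hgcd : Nat.setGcd returns = d := Nat.dvd_antisymm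
    (h.2 _ fun m _ hm => Nat.setGcd_dvd_of_mem hm)
    (Nat.dvd_setGcd_iff.mpr fun m hm => (Nat.eq_zero_or_pos m).elim
      (fun hm0 => hm0 ▸ dvd_zero d) (h.1 m · hm))
  obtain ⟨M, hM⟩ := Nat.exists_mem_closure_of_ge (returns : Set ℕ)
  rw [AddSubmonoid.closure_eq, hgcd] at hM
  exact eventually_atTop.mpr ⟨M, hM⟩

lemma isGcdPeriod_of_eventually_pow_apply_pos {i : S} {d : ℕ}
    (hdvd : ∀ m, 0 < m → 0 < (A ^ m) i i → d ∣ m)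
    (hpos : ∀ᶠ m in atTop, d ∣ m → 0 < (A ^ m) i i) : IsGcdPeriod A i d := by
  refine ⟨hdvd, fun e he => ?_⟩
  rcases Nat.eq_zero_or_pos d with rfl | hd
  · exact dvd_zero e
  obtain ⟨M, hM⟩ := eventually_atTop.mp hpos
  have hle : M ≤ d * (M + 1) := by nlinarith
  have h₁ := he _ (by positivity) (hM _ hle (dvd_mul_right d _))
  have h₂ := he _ (by positivity) (hM (d * (M + 1) + d) (by omega) (by simp))
  exact (Nat.dvd_add_right h₁).mp h₂

end NonnegMatrix

namespace CyclicClasses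

variable {K d : ℕ} {T : Matrix (Fin K) (Fin K) ℝ} {C : ℕ → Finset (Fin K)}

lemma apply_mod (hC : CyclicClasses T d C) (s : ℕ) : C (s % d) = C s := by
  conv_rhs => rw [← Nat.mod_add_div s d]
  induction s / d with
  | zero => simp
  | succ q ih => rw [Nat.mul_succ, ← add_assoc, hC.1, ih]

lemma congr_modEq (hC : CyclicClasses T d C) {a b : ℕ} (h : a ≡ b [MOD d]) : C a = C b := by
  rw [← hC.apply_mod a, ← hC.apply_mod b, h]

lemma modEq_of_mem (hC : CyclicClasses T d C) {k : Fin K} {a b : ℕ} (ha : k ∈ C a)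
    (hb : k ∈ C b) : a ≡ b [MOD d] := by
  obtain ⟨r, ⟨hr, -⟩, huniq⟩ := hC.2.1 k
  have hd : 0 < d := by omega
  have hmod {s : ℕ} (hs : k ∈ C s) : s % d = r :=
    huniq _ ⟨Nat.mod_lt s hd, hC.apply_mod s ▸ hs⟩
  exact (hmod ha).trans (hmod hb).symm

lemma mem_succ_of_pos (hC : CyclicClasses T d C) {j k : Fin K} {s : ℕ} (hj : j ∈ C s)
    (h : 0 < T j k) : k ∈ C (s + 1) := by
  obtain ⟨r, hjr, hkr⟩ := hC.2.2 j k h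
  rwa [← hC.congr_modEq ((hC.modEq_of_mem hjr hj).add_right 1)]

end CyclicClasses

section PCA

variable {K N nv : ℕ} {T : Matrix (Fin K) (Fin K) ℝ}

lemma self_mem_nbhd (n : Fin N) : n ∈ nbhd N nv n := by
  simp [nbhd]

lemma pcaP_nonneg (hT : ∀ j k, 0 ≤ T j k) (x y : Fin N → Fin K) :
    0 ≤ pcaP N K nv T x y := by
  rw [pcaP, of_apply]
  exact Finset.prod_nonneg fun _ _ =>
    mul_nonneg (by positivity) (Finset.sum_nonneg fun _ _ => hT _ _)

lemma exists_mem_nbhd_pos_of_pcaP_pos (hT : ∀ j k, 0 ≤ T j k) {x y : Fin N → Fin K}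
    (h : 0 < pcaP N K nv T x y) (n : Fin N) : ∃ i ∈ nbhd N nv n, 0 < T (x i) (y n) := by
  rw [pcaP, of_apply] at h
  have hfac := Finset.prod_ne_zero_iff.mp h.ne' n (Finset.mem_univ n)
  obtain ⟨i, hi, hne⟩ := Finset.exists_ne_zero_of_sum_ne_zero (right_ne_zero_of_mul hfac)
  exact ⟨i, hi, (hT _ _).lt_of_ne' hne⟩

lemma pcaP_pos_of_forall_pos (hT : ∀ j k, 0 ≤ T j k) {x y : Fin N → Fin K}
    (h : ∀ n, 0 < T (x n) (y n)) : 0 < pcaP N K nv T x y := by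
  rw [pcaP, of_apply]
  refine Finset.prod_pos fun n _ => mul_pos (inv_pos.mpr ?_) ?_
  · exact_mod_cast Finset.card_pos.mpr ⟨n, self_mem_nbhd n⟩
  · exact (h n).trans_le <| Finset.single_le_sum (f := fun i => T (x i) (y n))
      (fun _ _ => hT _ _) (self_mem_nbhd n)

lemma pcaP_pow_apply_pos_of_forall (hT : ∀ j k, 0 ≤ T j k) :
    ∀ {m : ℕ} {x y : Fin N → Fin K}, (∀ n, 0 < (T ^ m) (x n) (y n)) →
      0 < (pcaP N K nv T ^ m) x y
  | 0, x, y, h => by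
    obtain rfl : x = y :=
      funext fun n => by_contra fun hxy => (h n).ne' (by simp [one_apply_ne hxy])
    simp
  | m + 1, x, y, h => by
    choose u hxu huy using fun n => exists_pos_of_pow_succ_apply_pos hT (h n)
    exact pow_apply_pos_add (pcaP_nonneg hT) (pcaP_pow_apply_pos_of_forall hT hxu)
      (by rw [pow_one]; exact pcaP_pos_of_forall_pos hT huy)

lemma CyclicClasses.mem_of_pcaP_pow_apply_pos {d : ℕ} {C : ℕ → Finset (Fin K)}
    (hC : CyclicClasses T d C) (hT : ∀ j k, 0 ≤ T j k) {r m : ℕ} {x y : Fin N → Fin K}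
    (hx : ∀ n, x n ∈ C r)
    (h : 0 < (pcaP N K nv T ^ m) x y) (n : Fin N) : y n ∈ C (r + m) := by
  refine pow_apply_pos_induction (P := fun s z => ∀ n, z n ∈ C s) (pcaP_nonneg hT)
    (fun s u v hu huv n => ?_) hx h n
  obtain ⟨i, -, hi⟩ := exists_mem_nbhd_pos_of_pcaP_pos hT huv n
  exact hC.mem_succ_of_pos (hu i) hi

end PCA

theorem stmt_2_general {K N nv d : ℕ} (hN : 0 < N) (T : Matrix (Fin K) (Fin K) ℝ)
    (hT : RowStochastic T) (hper : ∀ i, IsGcdPeriod T i d)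
    (C : ℕ → Finset (Fin K)) (hC : CyclicClasses T d C)
    (r : ℕ) (x : Fin N → Fin K) (hx : ∀ n, x n ∈ C r) :
    IsGcdPeriod (pcaP N K nv T) x d := by
  refine isGcdPeriod_of_eventually_pow_apply_pos (fun m _ hm => ?_) ?_
  · have hret := hC.mem_of_pcaP_pow_apply_pos hT.1 hx hm ⟨0, hN⟩
    exact Nat.modEq_zero_iff_dvd.mp ((hC.modEq_of_mem (hx _) hret).add_left_cancel' r).symm
  · filter_upwards [eventually_all.mpr fun n => (hper (x n)).eventually_pow_apply_pos hT.1]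
      with m hm hdm
    exact pcaP_pow_apply_pos_of_forall hT.1 fun n => hm n hdm

/-- For the PCA on the `N`-cycle with irreducible local transition matrix `T`
of period `d` and cyclic classes `C`, every configuration all of whose coordinates lie in a
single class `C r` is a periodic state of the global chain with period exactly `d`. -/
theorem stmt_2 {K N nv d : ℕ} (hN : 0 < N) (T : Matrix (Fin K) (Fin K) ℝ)
    (hT : RowStochastic T) (hirr : MatIrreducible T) (hper : ∀ i, IsGcdPeriod T i d)
    (C : ℕ → Finset (Fin K)) (hC : CyclicClasses T d C)
    (r : ℕ) (x : Fin N → Fin K) (hx : ∀ n, x n ∈ C r) :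
    IsGcdPeriod (pcaP N K nv T) x d :=
  stmt_2_general hN T hT hper C hC r x hx
end

section
/- Let T be irreducible and aperiodic with unique stationary distribution π̃ ∈ ℝ^K, and let π be the unique stationary distribution of the PCA global transition matrix P on [K]^N. Then for each node n, the n-th marginal of π equals π̃: Σ_{x : x_n = k} π(x) = π̃(k) for all k ∈ [K]. -/
open Matrix Finset MeasureTheory

/-! Since the sites of the PCA update independently, each drawing its new state by `T` from
the state of a uniformly chosen neighbour, the marginals `μₙ` of any stationary `π` satisfy
`μₙ = |Vₙ|⁻¹ ∑_{i ∈ Vₙ} μᵢ T`: the matrix `U` with rows `μₙ - π̃` satisfies `U = A U T` for the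
stochastic neighbourhood-averaging matrix `A`, hence `U = Aᵗ U Tᵗ` for all `t`. Irreducibility
and aperiodicity make some `Tᵗ` entrywise positive, and then Doeblin's contraction forces
`U = 0`. -/

namespace Matrix

variable {S : Type*} [Fintype S] [DecidableEq S] {T : Matrix S S ℝ}

lemma pow_add_apply_pos (hT : ∀ i j, 0 ≤ T i j) {a b : ℕ} {i l j : S}
    (ha : 0 < (T ^ a) i l) (hb : 0 < (T ^ b) l j) : 0 < (T ^ (a + b)) i j := by
  rw [pow_add, mul_apply]
  exact lt_of_lt_of_le (mul_pos ha hb) <| single_le_sum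
    (fun l _ => mul_nonneg (pow_apply_nonneg hT a i l) (pow_apply_nonneg hT b l j)) (mem_univ l)

lemma pow_apply_self_pos_of_mem_closure (hT : ∀ i j, 0 ≤ T i j) {i : S} {m : ℕ}
    (hm : m ∈ AddSubmonoid.closure {m | 0 < (T ^ m) i i}) : 0 < (T ^ m) i i :=
  AddSubmonoid.closure_induction (fun _ h => h) (by simp)
    (fun _ _ _ _ ha hb => pow_add_apply_pos hT ha hb) hm

/-- Return times to an aperiodic state form a numerical semigroup of gcd one, hence contain
all large integers. -/
lemma exists_forall_ge_pow_apply_self_pos (hT : ∀ i j, 0 ≤ T i j) {i : S}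
    (hi : IsGcdPeriod T i 1) : ∃ m₀, ∀ m ≥ m₀, 0 < (T ^ m) i i := by
  set s : Set ℕ := {m | 0 < (T ^ m) i i}
  have hgcd : Nat.setGcd s = 1 :=
    Nat.dvd_one.mp <| hi.2 _ fun _ _ hm => Nat.setGcd_dvd_of_mem hm
  obtain ⟨m₀, hm₀⟩ := Nat.exists_mem_closure_of_ge s
  exact ⟨m₀, fun m hm => pow_apply_self_pos_of_mem_closure hT (hm₀ m hm (hgcd ▸ one_dvd m))⟩

theorem exists_pow_pos_of_aperiodic (hT : ∀ i j, 0 ≤ T i j) (hirr : MatIrreducible T)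
    (haper : ∀ i, IsGcdPeriod T i 1) : ∃ t, ∀ i j, 0 < (T ^ t) i j := by
  choose m₀ hm₀ using fun i => exists_forall_ge_pow_apply_self_pos hT (haper i)
  choose s hs using hirr
  refine ⟨∑ i, m₀ i + ∑ i, ∑ j, s i j, fun i j => ?_⟩
  have hm : m₀ i ≤ ∑ i, m₀ i := single_le_sum (fun _ _ => Nat.zero_le _) (mem_univ i)
  have hs_le : s i j ≤ ∑ i, ∑ j, s i j :=
    (single_le_sum (fun _ _ => Nat.zero_le _) (mem_univ j)).trans
      (single_le_sum (f := fun i => ∑ j, s i j) (fun _ _ => Nat.zero_le _) (mem_univ i))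
  have hpos := pow_add_apply_pos hT (hm₀ i (∑ i, m₀ i + ∑ i, ∑ j, s i j - s i j) (by omega))
    (hs i j)
  rwa [Nat.sub_add_cancel (by omega)] at hpos

end Matrix

section LocalKernel

variable {ι S : Type*} [Fintype ι] [DecidableEq ι] [Fintype S] [DecidableEq S]

def marginal (π : (ι → S) → ℝ) : Matrix ι S ℝ :=
  Matrix.of fun i j => ∑ x ∈ univ.filter (fun x : ι → S => x i = j), π x

lemma sum_marginal_apply (π : (ι → S) → ℝ) (i : ι) : ∑ j, marginal π i j = ∑ x, π x :=
  sum_fiberwise univ (fun x => x i) π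

lemma sum_mul_eval_eq_sum_marginal_mul (π : (ι → S) → ℝ) (i : ι) (f : S → ℝ) :
    ∑ x, π x * f (x i) = ∑ j, marginal π i j * f j := by
  rw [← sum_fiberwise univ (fun x => x i)]
  refine sum_congr rfl fun j _ => ?_
  rw [marginal, Matrix.of_apply, sum_mul]
  exact sum_congr rfl fun x hx => by rw [(mem_filter.1 hx).2]

lemma sum_filter_eval_eq_prod_sum (q : ι → S → ℝ) (hq : ∀ m, ∑ s, q m s = 1) (n : ι) (k : S) :
    ∑ y ∈ univ.filter (fun y : ι → S => y n = k), ∏ m, q m (y m) = q n k := by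
  have hfilter : univ.filter (fun y : ι → S => y n = k)
      = Fintype.piFinset (Function.update (fun _ => (univ : Finset S)) n {k}) := by
    rw [Fintype.piFinset_update_singleton_eq_filter_piFinset_eq _ n (mem_univ k),
      Fintype.piFinset_univ]
  rw [hfilter, ← prod_univ_sum, ← mul_prod_erase univ _ (mem_univ n), prod_congr rfl fun m hm => by rw [Function.update_of_ne (ne_of_mem_erase hm), hq]]
  simp

/-- Each site `n` resamples its state by `T` from the state of a site `i` drawn from the
distribution `A n`, independently over sites. -/
def localKernel (A : Matrix ι ι ℝ) (T : Matrix S S ℝ) : Matrix (ι → S) (ι → S) ℝ :=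
  Matrix.of fun x y => ∏ n, ∑ i, A n i * T (x i) (y n)

lemma sum_filter_localKernel {A : Matrix ι ι ℝ} (hA : A ∈ rowStochastic ℝ ι)
    {T : Matrix S S ℝ} (hT : T ∈ rowStochastic ℝ S) (x : ι → S) (n : ι) (k : S) :
    ∑ y ∈ univ.filter (fun y : ι → S => y n = k), localKernel A T x y
      = ∑ i, A n i * T (x i) k := by
  refine sum_filter_eval_eq_prod_sum (fun m s => ∑ i, A m i * T (x i) s) (fun m => ?_) n k
  rw [sum_comm]
  simp_rw [← mul_sum, sum_row_of_mem_rowStochastic hT, mul_one]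
  exact sum_row_of_mem_rowStochastic hA m

theorem marginal_eq_mul_mul_of_stationary {A : Matrix ι ι ℝ} (hA : A ∈ rowStochastic ℝ ι)
    {T : Matrix S S ℝ} (hT : T ∈ rowStochastic ℝ S) {π : (ι → S) → ℝ}
    (hπ : ∀ y, ∑ x, π x * localKernel A T x y = π y) :
    marginal π = A * (marginal π * T) := by
  ext n k
  calc marginal π n k
      = ∑ x, π x * ∑ y ∈ univ.filter (fun y : ι → S => y n = k), localKernel A T x y := by
        rw [marginal, Matrix.of_apply, sum_congr rfl fun y _ => (hπ y).symm, sum_comm]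
        simp_rw [mul_sum]
    _ = ∑ i, A n i * ∑ x, π x * T (x i) k := by
        simp_rw [sum_filter_localKernel hA hT, mul_sum]
        rw [sum_comm]
        exact sum_congr rfl fun i _ => sum_congr rfl fun x _ => by ring
    _ = (A * (marginal π * T)) n k := by
        simp_rw [sum_mul_eval_eq_sum_marginal_mul π _ (fun j => T j k), Matrix.mul_apply]

end LocalKernel

namespace Matrix

variable {ι S : Type*} [Fintype ι] [Fintype S]

/-- Doeblin's bound. Since `u` sums to zero, lowering every entry of `P` by `δ` does not change
`u ᵥ* P`, and the lowered matrix has row sums `1 - |S| δ`. -/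
lemma sum_abs_vecMul_le {P : Matrix S S ℝ} (hP : ∀ j, ∑ k, P j k = 1) {δ : ℝ}
    (hδ : ∀ j k, δ ≤ P j k) {u : S → ℝ} (hu : ∑ j, u j = 0) :
    ∑ k, |(u ᵥ* P) k| ≤ (1 - Fintype.card S * δ) * ∑ j, |u j| := by
  have hcoord : ∀ k, |(u ᵥ* P) k| ≤ ∑ j, |u j| * (P j k - δ) := fun k => calc
    |(u ᵥ* P) k| = |∑ j, u j * (P j k - δ)| := by
        simp only [vecMul, dotProduct, mul_sub, sum_sub_distrib, ← sum_mul, hu, zero_mul,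
          sub_zero]
    _ ≤ ∑ j, |u j * (P j k - δ)| := abs_sum_le_sum_abs _ _
    _ = ∑ j, |u j| * (P j k - δ) := sum_congr rfl fun j _ => by
        rw [abs_mul, abs_of_nonneg (sub_nonneg.2 (hδ j k))]
  calc ∑ k, |(u ᵥ* P) k| ≤ ∑ k, ∑ j, |u j| * (P j k - δ) := sum_le_sum fun k _ => hcoord k
    _ = ∑ j, |u j| * (1 - Fintype.card S * δ) := by
        rw [sum_comm]
        simp_rw [← mul_sum, sum_sub_distrib, hP, sum_const, card_univ, nsmul_eq_mul]
    _ = (1 - Fintype.card S * δ) * ∑ j, |u j| := by rw [← sum_mul, mul_comm]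

variable [DecidableEq ι] [DecidableEq S]

lemma eq_pow_mul_mul_pow {A : Matrix ι ι ℝ} {T : Matrix S S ℝ} {U : Matrix ι S ℝ}
    (hU : U = A * (U * T)) (t : ℕ) : U = A ^ t * (U * T ^ t) := by
  induction t with
  | zero => simp
  | succ t ih =>
    calc U = A ^ t * (A * (U * T) * T ^ t) := by rwa [← hU]
      _ = A ^ (t + 1) * (U * T ^ (t + 1)) := by
        rw [pow_succ A, pow_succ' T]
        simp only [Matrix.mul_assoc]

/-- Take the row of `U` of largest `ℓ¹` norm: it is an `A`-average of rows contracted by `P`,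
so Doeblin's bound forces its norm to vanish. -/
theorem eq_zero_of_eq_mul_mul {A : Matrix ι ι ℝ} (hA : A ∈ rowStochastic ℝ ι)
    {P : Matrix S S ℝ} (hP : P ∈ rowStochastic ℝ S) (hpos : ∀ j k, 0 < P j k)
    {U : Matrix ι S ℝ} (hU : U = A * (U * P)) (hrow : ∀ i, ∑ j, U i j = 0) : U = 0 := by
  rcases isEmpty_or_nonempty S with hS | hS
  · ext i j; exact isEmptyElim j
  rcases isEmpty_or_nonempty ι with hι | hι
  · ext i j; exact isEmptyElim i
  obtain ⟨⟨j₀, k₀⟩, hmin⟩ := Finite.exists_min fun p : S × S => P p.1 p.2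
  set c := Fintype.card S * P j₀ k₀
  have hc : 0 < c := mul_pos (by exact_mod_cast Fintype.card_pos) (hpos j₀ k₀)
  have hc_le : c ≤ 1 := by
    calc c = ∑ _k : S, P j₀ k₀ := by simp [c]
      _ ≤ ∑ k, P j₀ k := sum_le_sum fun k _ => hmin (j₀, k)
      _ = 1 := sum_row_of_mem_rowStochastic hP j₀
  set D : ι → ℝ := fun i => ∑ j, |U i j|
  obtain ⟨n, hn⟩ := Finite.exists_max D
  have hUn : ∀ k, U n k = ∑ i, A n i * (U i ᵥ* P) k := fun k => congrFun (congrFun hU n) k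
  have hDn : D n ≤ (1 - c) * D n := calc
    D n = ∑ k, |∑ i, A n i * (U i ᵥ* P) k| := sum_congr rfl fun k _ => by rw [hUn k]
    _ ≤ ∑ k, ∑ i, A n i * |(U i ᵥ* P) k| := sum_le_sum fun k _ =>
        (abs_sum_le_sum_abs _ _).trans_eq <| sum_congr rfl fun i _ => by
          rw [abs_mul, abs_of_nonneg (nonneg_of_mem_rowStochastic hA)]
    _ = ∑ i, A n i * ∑ k, |(U i ᵥ* P) k| := by
        rw [sum_comm]
        simp_rw [mul_sum]
    _ ≤ ∑ i, A n i * ((1 - c) * D n) := sum_le_sum fun i _ => by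
        gcongr
        · exact nonneg_of_mem_rowStochastic hA
        · exact (sum_abs_vecMul_le (sum_row_of_mem_rowStochastic hP)
            (fun j k => hmin (j, k)) (hrow i)).trans
            (mul_le_mul_of_nonneg_left (hn i) (by linarith))
    _ = (1 - c) * D n := by rw [← sum_mul, sum_row_of_mem_rowStochastic hA, one_mul]
  have hDn_nonpos : D n ≤ 0 := by nlinarith
  ext i j
  have hij : |U i j| ≤ 0 :=
    (single_le_sum (f := fun j => |U i j|) (fun _ _ => abs_nonneg _) (mem_univ j)).trans
      ((hn i).trans hDn_nonpos)
  exact abs_nonpos_iff.1 hij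

theorem eq_replicateRow_of_eq_mul_mul {A : Matrix ι ι ℝ} (hA : A ∈ rowStochastic ℝ ι)
    {T : Matrix S S ℝ} (hT : T ∈ rowStochastic ℝ S) {t : ℕ} (ht : ∀ j k, 0 < (T ^ t) j k)
    {v : S → ℝ} (hv : v ᵥ* T = v) {M : Matrix ι S ℝ} (hM : M = A * (M * T))
    (hrow : ∀ i, ∑ j, M i j = ∑ j, v j) : M = replicateRow ι v := by
  have hAv : A * replicateRow ι v = replicateRow ι v := by
    ext i k
    simp [mul_apply, ← sum_mul, sum_row_of_mem_rowStochastic hA]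
  have hU : M - replicateRow ι v = A * ((M - replicateRow ι v) * T) := by
    rw [Matrix.sub_mul, Matrix.mul_sub, ← replicateRow_vecMul, hv, hAv, ← hM]
  refine sub_eq_zero.1 <| eq_zero_of_eq_mul_mul (pow_mem hA t) (pow_mem hT t) ht
    (eq_pow_mul_mul_pow hU t) fun i => ?_
  simp [sum_sub_distrib, hrow]

end Matrix

lemma mem_nbhd_self (N nv : ℕ) (n : Fin N) : n ∈ nbhd N nv n := by
  simp [nbhd]

noncomputable def nbhdAvg (N nv : ℕ) : Matrix (Fin N) (Fin N) ℝ :=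
  Matrix.of fun n i => if i ∈ nbhd N nv n then ((nbhd N nv n).card : ℝ)⁻¹ else 0

lemma nbhdAvg_mem_rowStochastic (N nv : ℕ) : nbhdAvg N nv ∈ rowStochastic ℝ (Fin N) := by
  refine mem_rowStochastic_iff_sum.2 ⟨fun n i => ?_, fun n => ?_⟩
  · simp only [nbhdAvg, Matrix.of_apply]
    split_ifs <;> positivity
  · have hcard : ((nbhd N nv n).card : ℝ) ≠ 0 :=
      Nat.cast_ne_zero.2 (card_ne_zero.2 ⟨n, mem_nbhd_self N nv n⟩)
    simp [nbhdAvg, sum_ite_mem, hcard]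

lemma pcaP_eq_localKernel (N K nv : ℕ) (T : Matrix (Fin K) (Fin K) ℝ) :
    pcaP N K nv T = localKernel (nbhdAvg N nv) T := by
  ext x y
  simp only [pcaP, localKernel, Matrix.of_apply]
  refine prod_congr rfl fun n _ => ?_
  simp [nbhdAvg, ite_mul, sum_ite_mem, mul_sum]

/-- If `T` is irreducible and aperiodic with stationary distribution `π̃`, and
`π` is the stationary distribution of the PCA global transition matrix, then for every node
`n` the `n`-th marginal of `π` equals `π̃`. -/
theorem stmt_11 {K N nv : ℕ} (T : Matrix (Fin K) (Fin K) ℝ) (hT : RowStochastic T)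
    (hirr : MatIrreducible T) (haper : ∀ i, IsGcdPeriod T i 1)
    (πt : Fin K → ℝ)
    (hπt : (∀ k, 0 ≤ πt k) ∧ (∑ k, πt k = 1) ∧ ∀ k, ∑ j, πt j * T j k = πt k)
    (π : (Fin N → Fin K) → ℝ)
    (hπ : (∀ x, 0 ≤ π x) ∧ (∑ x, π x = 1) ∧ ∀ y, ∑ x, π x * pcaP N K nv T x y = π y) :
    ∀ (n : Fin N) (k : Fin K),
      ∑ x ∈ Finset.univ.filter (fun x : Fin N → Fin K => x n = k), π x = πt k := by
  have hT' : T ∈ rowStochastic ℝ (Fin K) := mem_rowStochastic_iff_sum.2 hT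
  have hA := nbhdAvg_mem_rowStochastic N nv
  obtain ⟨t, ht⟩ := exists_pow_pos_of_aperiodic hT.1 hirr haper
  have hmarginal : marginal π = nbhdAvg N nv * (marginal π * T) :=
    marginal_eq_mul_mul_of_stationary hA hT' (pcaP_eq_localKernel N K nv T ▸ hπ.2.2)
  have hrows : marginal π = replicateRow (Fin N) πt :=
    eq_replicateRow_of_eq_mul_mul hA hT' ht (funext hπt.2.2) hmarginal fun i => by
      rw [sum_marginal_apply, hπ.2.1, hπt.2.1]
  exact fun n k => congrFun₂ hrows n k
end

section
/- The invariant measure of the PCA does not determine the local transition matrix: for N = 2, K = 2 with neighborhood V_n = {1,2}, the two local transition matrices T^(1) = [[3/4, 1/4],[1/2, 1/2]] and T^(2) = [[7/12, 5/12],[5/6, 1/6]] give rise to distinct global transition matrices but the same stationary distribution π = (14/31, 20/93, 20/93, 11/93) on {1,2}^2. -/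
open Matrix Finset MeasureTheory

/-- For `N = 2`, `K = 2` with full neighborhoods, the two local transition
matrices `T⁽¹⁾ = [[3/4,1/4],[1/2,1/2]]` and `T⁽²⁾ = [[7/12,5/12],[5/6,1/6]]` give distinct
global transition matrices but the same stationary distribution
`π = (14/31, 20/93, 20/93, 11/93)` (configurations ordered 11, 12, 21, 22). -/
theorem stmt_12 :
    let T₁ : Matrix (Fin 2) (Fin 2) ℝ := !![3/4, 1/4; 1/2, 1/2]
    let T₂ : Matrix (Fin 2) (Fin 2) ℝ := !![7/12, 5/12; 5/6, 1/6]
    let π : (Fin 2 → Fin 2) → ℝ := fun x =>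
      if x 0 = 0 then (if x 1 = 0 then 14/31 else 20/93)
      else (if x 1 = 0 then 20/93 else 11/93)
    pcaP 2 2 1 T₁ ≠ pcaP 2 2 1 T₂ ∧
    (∀ y, ∑ x, π x * pcaP 2 2 1 T₁ x y = π y) ∧
    (∀ y, ∑ x, π x * pcaP 2 2 1 T₂ x y = π y) := by
  intro T₁ T₂ π
  have hn0 : nbhd 2 1 0 = Finset.univ := by decide
  have hn1 : nbhd 2 1 1 = Finset.univ := by decide
  have key : ∀ (T : Matrix (Fin 2) (Fin 2) ℝ) (x y : Fin 2 → Fin 2),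
      pcaP 2 2 1 T x y =
        (2:ℝ)⁻¹ * (T (x 0) (y 0) + T (x 1) (y 0)) *
          ((2:ℝ)⁻¹ * (T (x 0) (y 1) + T (x 1) (y 1))) := by
    intro T x y
    simp [pcaP, Fin.prod_univ_two, hn0, hn1, Fin.sum_univ_two]
  have hsum : ∀ f : (Fin 2 → Fin 2) → ℝ,
      ∑ x, f x = f ![0,0] + f ![0,1] + f ![1,0] + f ![1,1] := by
    intro f
    have hv : ∀ a b : Fin 2,
        (Fin.cons a (Fin.cons b finZeroElim) : Fin 2 → Fin 2) = ![a,b] := by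
      intro a b; funext i; fin_cases i <;> rfl
    rw [← (piFinTwoEquiv fun _ => Fin 2).symm.sum_comp]
    simp [Fintype.sum_prod_type, Fin.sum_univ_two, piFinTwoEquiv, hv]
    ring
  refine ⟨?_, ?_, ?_⟩
  · intro h
    have h00 := congrFun (congrFun h ![0,0]) ![0,0]
    rw [key, key] at h00
    simp [T₁, T₂] at h00
    norm_num at h00
  all_goals
    intro y
    rw [hsum]
    have h0 : y 0 = 0 ∨ y 0 = 1 := by omega
    have h1 : y 1 = 0 ∨ y 1 = 1 := by omega
    rcases h0 with h0 | h0 <;> rcases h1 with h1 | h1 <;>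
      simp [key, π, T₁, T₂, h0, h1] <;> norm_num
end

section
/- For two row-stochastic local transition matrices T^(1), T^(2) with global PCA transition matrices P_1, P_2, the Frobenius norm satisfies ‖P_1 − P_2‖_2 ≤ N (K C_K)^{N/2} ‖T^(1) − T^(2)‖_2, where C_K = max over i ∈ {1,2} and rows j of Σ_k (T^(i)_{jk})^2 ≤ 1. -/
open Matrix Finset MeasureTheory

/-- Telescoping identity for a difference of products over `Fin N`. -/
lemma tele_fin : ∀ (N : ℕ) (a b : Fin N → ℝ),
    ∏ n, a n - ∏ n, b n =
      ∑ m : Fin N, ∏ n, (if n < m then a n else if n = m then a n - b n else b n) := by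
  intro N
  induction N with
  | zero => simp
  | succ N ih =>
    intro a b
    rw [Fin.prod_univ_castSucc (f := a), Fin.prod_univ_castSucc (f := b),
      Fin.sum_univ_castSucc]
    have hlast : ∀ n : Fin (N+1),
        (if n < Fin.last N then a n else if n = Fin.last N then a n - b n else b n)
          = if n = Fin.last N then a n - b n else a n := by
      intro n
      rcases eq_or_lt_of_le (Fin.le_last n) with h | h
      · simp [h]
      · simp [h, Fin.ne_of_lt h]
    have h2 : ∀ m : Fin N,
        (∏ n : Fin (N+1), (if n < m.castSucc then a n else if n = m.castSucc then a n - b n else b n))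
          = (∏ n : Fin N, (if n < m then a n.castSucc else if n = m then a n.castSucc - b n.castSucc else b n.castSucc)) * b (Fin.last N) := by
      intro m
      rw [Fin.prod_univ_castSucc]
      congr 1
      · apply Finset.prod_congr rfl
        intro n _
        simp [Fin.castSucc_lt_castSucc_iff, Fin.castSucc_inj]
      · have h1 : ¬ (Fin.last N < m.castSucc) := by
          exact not_lt.2 (le_of_lt (Fin.castSucc_lt_last m))
        have h2 : (Fin.last N : Fin (N+1)) ≠ m.castSucc := (Fin.castSucc_lt_last m).ne'
        simp [h1, h2]
    rw [Finset.sum_congr rfl (fun m _ => h2 m)]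
    have h3 : (∏ n : Fin (N+1), (if n < (Fin.last N) then a n else if n = Fin.last N then a n - b n else b n))
        = (∏ n : Fin N, a n.castSucc) * (a (Fin.last N) - b (Fin.last N)) := by
      rw [Finset.prod_congr rfl (fun n _ => hlast n), Fin.prod_univ_castSucc]
      simp [fun n : Fin N => (Fin.castSucc_lt_last n).ne]
    rw [h3, ← Finset.sum_mul, ← ih (fun n => a n.castSucc) (fun n => b n.castSucc)]
    ring

/-- A sum over functions of a product of per-coordinate factors factorizes. -/
lemma sum_prod_eq {N K : ℕ} (F : Fin N → Fin K → ℝ) :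
    ∑ y : Fin N → Fin K, ∏ n, F n (y n) = ∏ n, ∑ k, F n k := by
  rw [Finset.prod_univ_sum]
  apply Finset.sum_congr
  · simp [Fintype.piFinset_univ]
  · exact fun _ _ => rfl

/-- Summing a function of one coordinate over all configurations. -/
lemma sum_apply_eq {N K : ℕ} (n' : Fin N) (g : Fin K → ℝ) :
    ∑ x : Fin N → Fin K, g (x n') = (K : ℝ) ^ (N - 1) * ∑ j, g j := by
  have h : ∀ x : Fin N → Fin K, g (x n') = ∏ n, (if n = n' then g (x n) else 1) := by
    intro x
    rw [Finset.prod_ite_eq' Finset.univ n' (fun n => g (x n))]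
    simp
  simp_rw [h]
  rw [sum_prod_eq (fun n k => if n = n' then g k else 1)]
  rw [← Finset.mul_prod_erase Finset.univ _ (Finset.mem_univ n')]
  simp only [if_pos rfl]
  rw [mul_comm]
  congr 1
  have he : ∀ n ∈ Finset.univ.erase n',
      (∑ k : Fin K, if n = n' then g k else 1) = (K : ℝ) := by
    intro n hn
    simp [Finset.ne_of_mem_erase hn]
  rw [Finset.prod_congr rfl he, Finset.prod_const, Finset.card_erase_of_mem (Finset.mem_univ n')]
  simp

/-- The local averaged transition factor. -/
noncomputable def locF (N K nv : ℕ) (T : Matrix (Fin K) (Fin K) ℝ)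
    (x : Fin N → Fin K) (n : Fin N) (k : Fin K) : ℝ :=
  ((nbhd N nv n).card : ℝ)⁻¹ * ∑ i ∈ nbhd N nv n, T (x i) k

lemma locF_sub {N K nv : ℕ} (T₁ T₂ : Matrix (Fin K) (Fin K) ℝ)
    (x : Fin N → Fin K) (n : Fin N) (k : Fin K) :
    locF N K nv T₁ x n k - locF N K nv T₂ x n k = locF N K nv (T₁ - T₂) x n k := by
  simp [locF, Finset.sum_sub_distrib, mul_sub]

lemma nbhd_self_mem {N nv : ℕ} (n : Fin N) : n ∈ nbhd N nv n := by
  simp only [nbhd, Finset.mem_filter, Finset.mem_univ, true_and]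
  left
  rw [Nat.add_sub_cancel_left, Nat.mod_self]
  exact Nat.zero_le nv

lemma nbhd_card_pos {N nv : ℕ} (n : Fin N) : 0 < (nbhd N nv n).card :=
  Finset.card_pos.2 ⟨n, nbhd_self_mem n⟩

/-- Cauchy–Schwarz bound for averages over a neighborhood. -/
lemma avg_sq {ι : Type*} {K : ℕ} (V : Finset ι) (hV : 0 < V.card) (t : ι → Fin K → ℝ) :
    ∑ k, (((V.card : ℝ))⁻¹ * ∑ n' ∈ V, t n' k) ^ 2
      ≤ ((V.card : ℝ))⁻¹ * ∑ n' ∈ V, ∑ k, t n' k ^ 2 := by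
  have hc : (0:ℝ) < V.card := by exact_mod_cast hV
  have h1 : ∀ k : Fin K, (((V.card : ℝ))⁻¹ * ∑ n' ∈ V, t n' k) ^ 2
      ≤ ((V.card : ℝ))⁻¹ * ∑ n' ∈ V, t n' k ^ 2 := by
    intro k
    have h2 : (∑ n' ∈ V, t n' k) ^ 2 ≤ (V.card : ℝ) * ∑ n' ∈ V, t n' k ^ 2 :=
      sq_sum_le_card_mul_sum_sq
    rw [mul_pow]
    calc ((V.card:ℝ)⁻¹) ^ 2 * (∑ n' ∈ V, t n' k) ^ 2
        ≤ ((V.card:ℝ)⁻¹) ^ 2 * ((V.card : ℝ) * ∑ n' ∈ V, t n' k ^ 2) := by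
          apply mul_le_mul_of_nonneg_left h2 (by positivity)
      _ = (V.card:ℝ)⁻¹ * ∑ n' ∈ V, t n' k ^ 2 := by
          field_simp
  calc ∑ k, (((V.card : ℝ))⁻¹ * ∑ n' ∈ V, t n' k) ^ 2
      ≤ ∑ k, ((V.card:ℝ)⁻¹ * ∑ n' ∈ V, t n' k ^ 2) := Finset.sum_le_sum (fun k _ => h1 k)
    _ = _ := by rw [← Finset.mul_sum, Finset.sum_comm]

lemma avg_sq_le {ι : Type*} {K : ℕ} (V : Finset ι) (hV : 0 < V.card) (t : ι → Fin K → ℝ)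
    {C : ℝ} (ht : ∀ n' ∈ V, ∑ k, t n' k ^ 2 ≤ C) :
    ∑ k, (((V.card : ℝ))⁻¹ * ∑ n' ∈ V, t n' k) ^ 2 ≤ C := by
  have hc : (0:ℝ) < V.card := by exact_mod_cast hV
  refine (avg_sq V hV t).trans ?_
  calc ((V.card:ℝ))⁻¹ * ∑ n' ∈ V, ∑ k, t n' k ^ 2
      ≤ ((V.card:ℝ))⁻¹ * ∑ n' ∈ V, C := by
        apply mul_le_mul_of_nonneg_left (Finset.sum_le_sum ht) (by positivity)
    _ = C := by
        rw [Finset.sum_const, nsmul_eq_mul]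
        field_simp

/-- For two row-stochastic local transition matrices with global PCA
transition matrices `P₁, P₂`, the Frobenius norms satisfy
`‖P₁ − P₂‖₂ ≤ N (K C_K)^{N/2} ‖T⁽¹⁾ − T⁽²⁾‖₂`, where
`C_K = max_{i∈{1,2}} max_j Σ_k (T⁽ⁱ⁾_{jk})² ≤ 1`. -/
theorem stmt_14 {K N nv : ℕ} (hK : 0 < K) (T₁ T₂ : Matrix (Fin K) (Fin K) ℝ)
    (hT₁ : RowStochastic T₁) (hT₂ : RowStochastic T₂) :
    (⨆ j : Fin K, max (∑ k, T₁ j k ^ 2) (∑ k, T₂ j k ^ 2)) ≤ 1 ∧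
    Real.sqrt (∑ x : Fin N → Fin K, ∑ y : Fin N → Fin K,
        (pcaP N K nv T₁ x y - pcaP N K nv T₂ x y) ^ 2)
      ≤ (N : ℝ) *
        Real.sqrt (((K : ℝ) * ⨆ j : Fin K, max (∑ k, T₁ j k ^ 2) (∑ k, T₂ j k ^ 2)) ^ N) *
        Real.sqrt (∑ j, ∑ k, (T₁ j k - T₂ j k) ^ 2) := by
  have hKn : Nonempty (Fin K) := ⟨⟨0, hK⟩⟩
  set C := (⨆ j : Fin K, max (∑ k, T₁ j k ^ 2) (∑ k, T₂ j k ^ 2)) with hCdef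
  set D := (∑ j, ∑ k, (T₁ j k - T₂ j k) ^ 2) with hDdef
  have hsq : ∀ (T : Matrix (Fin K) (Fin K) ℝ), RowStochastic T → ∀ j, ∑ k, T j k ^ 2 ≤ 1 := by
    intro T hT j
    calc ∑ k, T j k ^ 2 ≤ ∑ k, T j k := by
          apply Finset.sum_le_sum
          intro k _
          have h1 : T j k ≤ 1 := by
            have h2 := Finset.single_le_sum (f := fun k => T j k)
              (fun k _ => hT.1 j k) (Finset.mem_univ k)
            rw [hT.2 j] at h2
            exact h2
          nlinarith [hT.1 j k]
      _ = 1 := hT.2 j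
  have hC1 : C ≤ 1 := ciSup_le fun j => max_le (hsq T₁ hT₁ j) (hsq T₂ hT₂ j)
  refine ⟨hC1, ?_⟩
  have hCb : ∀ j : Fin K, max (∑ k, T₁ j k ^ 2) (∑ k, T₂ j k ^ 2) ≤ C := by
    intro j
    rw [hCdef]
    exact le_ciSup (Finite.bddAbove_range
      (fun j : Fin K => max (∑ k, T₁ j k ^ 2) (∑ k, T₂ j k ^ 2))) j
  have hC1j : ∀ j, ∑ k, T₁ j k ^ 2 ≤ C := fun j => (le_max_left _ _).trans (hCb j)
  have hC2j : ∀ j, ∑ k, T₂ j k ^ 2 ≤ C := fun j => (le_max_right _ _).trans (hCb j)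
  have hC0 : 0 ≤ C := le_trans (by positivity) (hC1j ⟨0, hK⟩)
  have hD0 : (0:ℝ) ≤ D := by rw [hDdef]; positivity
  have hKC : 1 ≤ (K : ℝ) * C := by
    have h1 : (∑ k, T₁ ⟨0, hK⟩ k) ^ 2 ≤ (Finset.univ.card : ℝ) * ∑ k, T₁ ⟨0, hK⟩ k ^ 2 :=
      sq_sum_le_card_mul_sum_sq
    rw [hT₁.2, Finset.card_univ, Fintype.card_fin] at h1
    calc (1:ℝ) = 1 ^ 2 := by norm_num
      _ ≤ (K : ℝ) * ∑ k, T₁ ⟨0, hK⟩ k ^ 2 := h1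
      _ ≤ (K : ℝ) * C := by
          apply mul_le_mul_of_nonneg_left (hC1j _) (by positivity)
  -- bounds on the local averaged factors
  have hloc₁ : ∀ (x : Fin N → Fin K) (n : Fin N), ∑ k, (locF N K nv T₁ x n k) ^ 2 ≤ C := by
    intro x n
    exact avg_sq_le _ (nbhd_card_pos n) (fun i k => T₁ (x i) k) (fun i _ => hC1j (x i))
  have hloc₂ : ∀ (x : Fin N → Fin K) (n : Fin N), ∑ k, (locF N K nv T₂ x n k) ^ 2 ≤ C := by
    intro x n
    exact avg_sq_le _ (nbhd_card_pos n) (fun i k => T₂ (x i) k) (fun i _ => hC2j (x i))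
  -- G: the telescoping factor
  classical
  set G : (Fin N → Fin K) → Fin N → Fin N → Fin K → ℝ := fun x m n k =>
    if n < m then locF N K nv T₁ x n k
    else if n = m then locF N K nv T₁ x n k - locF N K nv T₂ x n k
    else locF N K nv T₂ x n k with hGdef
  have htele : ∀ x y, pcaP N K nv T₁ x y - pcaP N K nv T₂ x y
      = ∑ m, ∏ n, G x m n (y n) := by
    intro x y
    have := tele_fin N (fun n => locF N K nv T₁ x n (y n)) (fun n => locF N K nv T₂ x n (y n))
    simpa [pcaP, locF, hGdef] using this
  -- the per-m bound
  have hm : ∀ m : Fin N,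
      ∑ x : Fin N → Fin K, ∑ y : Fin N → Fin K, (∏ n, G x m n (y n)) ^ 2
        ≤ ((K : ℝ) * C) ^ N * D := by
    intro m
    have hstep : ∀ x : Fin N → Fin K,
        ∑ y : Fin N → Fin K, (∏ n, G x m n (y n)) ^ 2
          ≤ C ^ (N - 1) * ∑ k, (locF N K nv (T₁ - T₂) x m k) ^ 2 := by
      intro x
      have hfac : ∑ y : Fin N → Fin K, (∏ n, G x m n (y n)) ^ 2
          = ∏ n, ∑ k, (G x m n k) ^ 2 := by
        have h := sum_prod_eq (fun n k => (G x m n k) ^ 2)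
        rw [← h]
        apply Finset.sum_congr rfl
        intro y _
        rw [← Finset.prod_pow]
      rw [hfac, ← Finset.mul_prod_erase Finset.univ _ (Finset.mem_univ m)]
      have hGm : ∀ k, G x m m k = locF N K nv (T₁ - T₂) x m k := by
        intro k
        rw [hGdef]
        simp [locF_sub]
      have hGn : ∀ n ∈ Finset.univ.erase m, ∑ k, (G x m n k) ^ 2 ≤ C := by
        intro n hn
        have hne : n ≠ m := Finset.ne_of_mem_erase hn
        by_cases hlt : n < m
        · simp only [hGdef, if_pos hlt]
          exact hloc₁ x n
        · simp only [hGdef, if_neg hlt, if_neg hne]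
          exact hloc₂ x n
      have herase : ∏ n ∈ Finset.univ.erase m, ∑ k, (G x m n k) ^ 2 ≤ C ^ (N - 1) := by
        calc ∏ n ∈ Finset.univ.erase m, ∑ k, (G x m n k) ^ 2
            ≤ ∏ n ∈ Finset.univ.erase m, C := by
              apply Finset.prod_le_prod
              · intro n _; positivity
              · exact hGn
          _ = C ^ (N - 1) := by
              rw [Finset.prod_const, Finset.card_erase_of_mem (Finset.mem_univ m),
                Finset.card_univ, Fintype.card_fin]
      calc (∑ k, (G x m m k) ^ 2) * ∏ n ∈ Finset.univ.erase m, ∑ k, (G x m n k) ^ 2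
          ≤ (∑ k, (G x m m k) ^ 2) * C ^ (N - 1) := by
            apply mul_le_mul_of_nonneg_left herase (by positivity)
        _ = C ^ (N - 1) * ∑ k, (locF N K nv (T₁ - T₂) x m k) ^ 2 := by
            rw [mul_comm]
            congr 1
            exact Finset.sum_congr rfl (fun k _ => by rw [hGm k])
    have hsumx : ∑ x : Fin N → Fin K, ∑ k, (locF N K nv (T₁ - T₂) x m k) ^ 2
        ≤ (K : ℝ) ^ (N - 1) * D := by
      have hx : ∀ x : Fin N → Fin K,
          ∑ k, (locF N K nv (T₁ - T₂) x m k) ^ 2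
            ≤ ((nbhd N nv m).card : ℝ)⁻¹ *
              ∑ n' ∈ nbhd N nv m, ∑ k, ((T₁ - T₂) (x n') k) ^ 2 :=
        fun x => avg_sq _ (nbhd_card_pos m) (fun i k => (T₁ - T₂) (x i) k)
      have hcard : (0:ℝ) < ((nbhd N nv m).card : ℝ) := by
        exact_mod_cast nbhd_card_pos m
      calc ∑ x : Fin N → Fin K, ∑ k, (locF N K nv (T₁ - T₂) x m k) ^ 2
          ≤ ∑ x : Fin N → Fin K, ((nbhd N nv m).card : ℝ)⁻¹ *
              ∑ n' ∈ nbhd N nv m, ∑ k, ((T₁ - T₂) (x n') k) ^ 2 :=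
            Finset.sum_le_sum (fun x _ => hx x)
        _ = ((nbhd N nv m).card : ℝ)⁻¹ * ∑ n' ∈ nbhd N nv m,
              ∑ x : Fin N → Fin K, ∑ k, ((T₁ - T₂) (x n') k) ^ 2 := by
            rw [← Finset.mul_sum, Finset.sum_comm]
        _ = ((nbhd N nv m).card : ℝ)⁻¹ * ∑ n' ∈ nbhd N nv m, ((K : ℝ) ^ (N - 1) * D) := by
            congr 1
            apply Finset.sum_congr rfl
            intro n' _
            rw [sum_apply_eq n' (fun j => ∑ k, ((T₁ - T₂) j k) ^ 2)]
            simp [hDdef, Matrix.sub_apply]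
        _ = (K : ℝ) ^ (N - 1) * D := by
            rw [Finset.sum_const, nsmul_eq_mul, ← mul_assoc,
              inv_mul_cancel₀ hcard.ne', one_mul]
    calc ∑ x : Fin N → Fin K, ∑ y : Fin N → Fin K, (∏ n, G x m n (y n)) ^ 2
        ≤ ∑ x : Fin N → Fin K, C ^ (N - 1) * ∑ k, (locF N K nv (T₁ - T₂) x m k) ^ 2 :=
          Finset.sum_le_sum (fun x _ => hstep x)
      _ = C ^ (N - 1) * ∑ x : Fin N → Fin K, ∑ k, (locF N K nv (T₁ - T₂) x m k) ^ 2 := by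
          rw [Finset.mul_sum]
      _ ≤ C ^ (N - 1) * ((K : ℝ) ^ (N - 1) * D) := by
          apply mul_le_mul_of_nonneg_left hsumx (by positivity)
      _ = ((K : ℝ) * C) ^ (N - 1) * D := by rw [mul_pow]; ring
      _ ≤ ((K : ℝ) * C) ^ N * D := by
          apply mul_le_mul_of_nonneg_right
            (pow_le_pow_right₀ hKC (Nat.sub_le N 1)) hD0
  -- assemble
  have key : ∑ x : Fin N → Fin K, ∑ y : Fin N → Fin K,
      (pcaP N K nv T₁ x y - pcaP N K nv T₂ x y) ^ 2
        ≤ (N : ℝ) ^ 2 * ((K : ℝ) * C) ^ N * D := by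
    have step1 : ∀ x y, (pcaP N K nv T₁ x y - pcaP N K nv T₂ x y) ^ 2
        ≤ (N : ℝ) * ∑ m, (∏ n, G x m n (y n)) ^ 2 := by
      intro x y
      rw [htele x y]
      have h := sq_sum_le_card_mul_sum_sq (s := Finset.univ)
        (f := fun m : Fin N => ∏ n, G x m n (y n))
      simpa [Finset.card_univ] using h
    calc ∑ x : Fin N → Fin K, ∑ y : Fin N → Fin K,
        (pcaP N K nv T₁ x y - pcaP N K nv T₂ x y) ^ 2
        ≤ ∑ x : Fin N → Fin K, ∑ y : Fin N → Fin K,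
            (N : ℝ) * ∑ m, (∏ n, G x m n (y n)) ^ 2 :=
          Finset.sum_le_sum (fun x _ => Finset.sum_le_sum (fun y _ => step1 x y))
      _ = (N : ℝ) * ∑ m : Fin N, ∑ x : Fin N → Fin K, ∑ y : Fin N → Fin K,
            (∏ n, G x m n (y n)) ^ 2 := by
          simp_rw [← Finset.mul_sum]
          congr 1
          rw [show (∑ x : Fin N → Fin K, ∑ y : Fin N → Fin K, ∑ m : Fin N,
                (∏ n, G x m n (y n)) ^ 2)
              = ∑ x : Fin N → Fin K, ∑ m : Fin N, ∑ y : Fin N → Fin K,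
                (∏ n, G x m n (y n)) ^ 2
            from Finset.sum_congr rfl (fun x _ => Finset.sum_comm)]
          exact Finset.sum_comm
      _ ≤ (N : ℝ) * ∑ m : Fin N, ((K : ℝ) * C) ^ N * D := by
          apply mul_le_mul_of_nonneg_left (Finset.sum_le_sum (fun m _ => hm m))
            (by positivity)
      _ = (N : ℝ) ^ 2 * ((K : ℝ) * C) ^ N * D := by
          rw [Finset.sum_const, Finset.card_univ, Fintype.card_fin, nsmul_eq_mul]
          ring
  calc Real.sqrt (∑ x : Fin N → Fin K, ∑ y : Fin N → Fin K,
        (pcaP N K nv T₁ x y - pcaP N K nv T₂ x y) ^ 2)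
      ≤ Real.sqrt ((N : ℝ) ^ 2 * ((K : ℝ) * C) ^ N * D) := Real.sqrt_le_sqrt key
    _ = (N : ℝ) * Real.sqrt (((K : ℝ) * C) ^ N) * Real.sqrt D := by
        rw [Real.sqrt_mul (by positivity), Real.sqrt_mul (by positivity),
          Real.sqrt_sq (by positivity)]
end

section
/- Let P_1, P_2 be finite irreducible stochastic matrices with stationary distributions π_1, π_2, and suppose τ(P_1^{ℓ_0}) < 1 for some ℓ_0 ∈ ℕ, where τ(A) = (1/2) max_{x,x'} ‖A(x,·) − A(x',·)‖_1. Then ‖π_1 − π_2‖_1 ≤ (1 + (ℓ_0 − 1) n)/(1 − τ(P_1^{ℓ_0})) · ‖P_1 − P_2‖_1, where n is the number of states and ‖A‖_1 = Σ_{x,y}|A(x,y)|. -/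
open Matrix Finset MeasureTheory

/-- The Dobrushin coefficient `τ(A) = (1/2) max_{x,x'} ‖A(x,·) − A(x',·)‖₁`. -/
noncomputable def tauCoef {S : Type*} [Fintype S] (A : Matrix S S ℝ) : ℝ :=
  (1 / 2) * ⨆ p : S × S, ∑ y, |A p.1 y - A p.2 y|

/-!
With `A = P₁^ℓ₀` and `B = P₂^ℓ₀`, stationarity gives `π₁ - π₂ = (π₁ - π₂) A + π₂ (A - B)`.
As `π₁ - π₂` has total mass zero, Dobrushin's contraction bounds the first term by
`τ(A) ‖π₁ - π₂‖₁`, and the second is at most `‖A - B‖₁`. Writing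
`A - B = Σ_ℓ P₂^(ℓ-1) (P₁ - P₂) P₁^(ℓ₀-ℓ)`, the term `ℓ = 1` has `‖·‖₁` at most `‖P₁ - P₂‖₁`
and every other term at most `n ‖P₁ - P₂‖₁`, because a stochastic factor on the right does not
increase `‖·‖₁` and one on the left increases it at most `n`-fold.
-/

section L1Norms

variable {ι κ : Type*} [Fintype ι] [Fintype κ]

def l1Norm (v : ι → ℝ) : ℝ := ∑ x, |v x|

def entrywiseL1Norm (M : Matrix ι κ ℝ) : ℝ := ∑ x, l1Norm (M x)

lemma l1Norm_nonneg (v : ι → ℝ) : 0 ≤ l1Norm v :=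
  Finset.sum_nonneg fun x _ => abs_nonneg (v x)

lemma l1Norm_add_le (v w : ι → ℝ) : l1Norm (v + w) ≤ l1Norm v + l1Norm w := by
  rw [l1Norm, l1Norm, l1Norm, ← Finset.sum_add_distrib]
  exact Finset.sum_le_sum fun x _ => abs_add_le (v x) (w x)

lemma entrywiseL1Norm_nonneg (M : Matrix ι κ ℝ) : 0 ≤ entrywiseL1Norm M :=
  Finset.sum_nonneg fun x _ => l1Norm_nonneg (M x)

lemma entrywiseL1Norm_add_le (M N : Matrix ι κ ℝ) :
    entrywiseL1Norm (M + N) ≤ entrywiseL1Norm M + entrywiseL1Norm N := by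
  rw [entrywiseL1Norm, entrywiseL1Norm, entrywiseL1Norm, ← Finset.sum_add_distrib]
  exact Finset.sum_le_sum fun x _ => l1Norm_add_le (M x) (N x)

lemma l1Norm_vecMul_le_entrywiseL1Norm {v : ι → ℝ} (hv : ∀ x, |v x| ≤ 1) (M : Matrix ι κ ℝ) :
    l1Norm (v ᵥ* M) ≤ entrywiseL1Norm M := by
  calc l1Norm (v ᵥ* M) ≤ ∑ y, ∑ x, |v x| * |M x y| := by
        refine Finset.sum_le_sum fun y _ => ?_
        refine (Finset.abs_sum_le_sum_abs (fun x => v x * M x y) univ).trans_eq ?_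
        simp only [abs_mul]
    _ ≤ ∑ y, ∑ x, |M x y| := by
        gcongr with y _ x _
        exact mul_le_of_le_one_left (abs_nonneg _) (hv x)
    _ = entrywiseL1Norm M := Finset.sum_comm

end L1Norms

section Stochastic

variable {S : Type*} [Fintype S]

lemma RowStochastic.abs_le_one {Q : Matrix S S ℝ} (hQ : RowStochastic Q) (x y : S) :
    |Q x y| ≤ 1 := by
  rw [abs_of_nonneg (hQ.1 x y), ← hQ.2 x]
  exact Finset.single_le_sum (fun z _ => hQ.1 x z) (Finset.mem_univ y)

lemma RowStochastic.pow [DecidableEq S] {Q : Matrix S S ℝ} (hQ : RowStochastic Q) (ℓ : ℕ) :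
    RowStochastic (Q ^ ℓ) := by
  induction ℓ with
  | zero =>
    exact ⟨fun j k => by by_cases h : j = k <;> simp [one_apply, h], fun j => by simp [one_apply]⟩
  | succ n ih =>
    rw [pow_succ]
    refine ⟨fun j k => Finset.sum_nonneg fun z _ => mul_nonneg (ih.1 j z) (hQ.1 z k), fun j => ?_⟩
    simp only [mul_apply]
    rw [Finset.sum_comm]
    simp only [← Finset.mul_sum, hQ.2, mul_one, ih.2]

lemma l1Norm_vecMul_le_of_rowStochastic {Q : Matrix S S ℝ} (hQ : RowStochastic Q) (v : S → ℝ) :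
    l1Norm (v ᵥ* Q) ≤ l1Norm v := by
  calc l1Norm (v ᵥ* Q) ≤ ∑ y, ∑ x, |v x| * Q x y := by
        refine Finset.sum_le_sum fun y _ => ?_
        refine (Finset.abs_sum_le_sum_abs (fun x => v x * Q x y) univ).trans_eq ?_
        simp only [abs_mul, abs_of_nonneg (hQ.1 _ y)]
    _ = l1Norm v := by
        rw [Finset.sum_comm]
        simp only [← Finset.mul_sum, hQ.2, mul_one, l1Norm]

lemma entrywiseL1Norm_mul_le_of_rowStochastic {Q : Matrix S S ℝ} (hQ : RowStochastic Q)
    (M : Matrix S S ℝ) : entrywiseL1Norm (M * Q) ≤ entrywiseL1Norm M := by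
  refine Finset.sum_le_sum fun x _ => ?_
  rw [mul_apply_eq_vecMul]
  exact l1Norm_vecMul_le_of_rowStochastic hQ (M x)

lemma entrywiseL1Norm_rowStochastic_mul_le {Q : Matrix S S ℝ} (hQ : RowStochastic Q)
    (M : Matrix S S ℝ) : entrywiseL1Norm (Q * M) ≤ Fintype.card S * entrywiseL1Norm M := by
  calc entrywiseL1Norm (Q * M) ≤ ∑ _x : S, entrywiseL1Norm M := by
        refine Finset.sum_le_sum fun x _ => ?_
        rw [mul_apply_eq_vecMul]
        exact l1Norm_vecMul_le_entrywiseL1Norm (hQ.abs_le_one x) M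
    _ = Fintype.card S * entrywiseL1Norm M := by simp

lemma entrywiseL1Norm_pow_sub_pow_le [DecidableEq S] {P₁ P₂ : Matrix S S ℝ}
    (hP₁ : RowStochastic P₁) (hP₂ : RowStochastic P₂) (m : ℕ) :
    entrywiseL1Norm (P₁ ^ (m + 1) - P₂ ^ (m + 1))
      ≤ (1 + m * Fintype.card S) * entrywiseL1Norm (P₁ - P₂) := by
  induction m with
  | zero => simp
  | succ k ih =>
    have hsplit : P₁ ^ (k + 2) - P₂ ^ (k + 2)
        = (P₁ ^ (k + 1) - P₂ ^ (k + 1)) * P₁ + P₂ ^ (k + 1) * (P₁ - P₂) := by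
      rw [pow_succ P₁ (k + 1), pow_succ P₂ (k + 1)]
      noncomm_ring
    calc entrywiseL1Norm (P₁ ^ (k + 1 + 1) - P₂ ^ (k + 1 + 1))
        ≤ entrywiseL1Norm (P₁ ^ (k + 1) - P₂ ^ (k + 1))
          + Fintype.card S * entrywiseL1Norm (P₁ - P₂) := by
          rw [hsplit]
          refine (entrywiseL1Norm_add_le _ _).trans (add_le_add ?_ ?_)
          · exact entrywiseL1Norm_mul_le_of_rowStochastic hP₁ _
          · exact entrywiseL1Norm_rowStochastic_mul_le (hP₂.pow _) _
      _ ≤ (1 + (k + 1 : ℕ) * Fintype.card S) * entrywiseL1Norm (P₁ - P₂) := by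
          push_cast
          linarith

end Stochastic

section Dobrushin

variable {S : Type*} [Fintype S]

lemma sum_abs_sub_le_two_mul_tauCoef (A : Matrix S S ℝ) (x x' : S) :
    ∑ y, |A x y - A x' y| ≤ 2 * tauCoef A := by
  have hle := le_ciSup (Set.finite_range fun p : S × S => ∑ y, |A p.1 y - A p.2 y|).bddAbove
    (x, x')
  rw [tauCoef]
  linarith

lemma card_le_one_of_tauCoef_one_lt_one [DecidableEq S] (h : tauCoef (1 : Matrix S S ℝ) < 1) :
    Fintype.card S ≤ 1 := by
  by_contra! hcard
  obtain ⟨a, b, hab⟩ := Fintype.one_lt_card_iff.mp hcard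
  have hpair : ∑ y ∈ {a, b}, |(1 : Matrix S S ℝ) a y - (1 : Matrix S S ℝ) b y| = 2 := by
    rw [Finset.sum_pair hab]
    simp [hab, hab.symm]
    norm_num
  have hle := Finset.sum_le_sum_of_subset_of_nonneg (Finset.subset_univ {a, b})
    fun y _ _ => abs_nonneg ((1 : Matrix S S ℝ) a y - (1 : Matrix S S ℝ) b y)
  linarith [sum_abs_sub_le_two_mul_tauCoef (1 : Matrix S S ℝ) a b]

lemma sum_sum_mul_mul_sub_eq {T : Type*} (p q : S → ℝ) (A : Matrix S T ℝ) (y : T) :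
    ∑ x, ∑ x', p x * q x' * (A x y - A x' y)
      = (∑ x', q x') * (p ᵥ* A) y - (∑ x, p x) * (q ᵥ* A) y := by
  simp only [mul_sub, Finset.sum_sub_distrib, vecMul, dotProduct, Finset.mul_sum,
    Finset.sum_mul]
  rw [Finset.sum_comm (f := fun x x' => p x * q x' * A x' y)]
  congr 1 <;> exact Finset.sum_congr rfl fun _ _ => Finset.sum_congr rfl fun _ _ => by ring

theorem l1Norm_vecMul_le_tauCoef_mul (A : Matrix S S ℝ) {v : S → ℝ} (hv : ∑ x, v x = 0) :
    l1Norm (v ᵥ* A) ≤ tauCoef A * l1Norm v := by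
  set c := ∑ x, (v x)⁺
  have hc : ∑ x, (v x)⁻ = c := by
    have hsplit : ∑ x, v x = c - ∑ x, (v x)⁻ := by
      simp only [c, ← Finset.sum_sub_distrib, posPart_sub_negPart]
    linarith
  have hl1 : l1Norm v = 2 * c := by
    simp only [l1Norm, ← posPart_add_negPart (v _), Finset.sum_add_distrib, hc]
    ring
  have hc0 : 0 ≤ c := Finset.sum_nonneg fun x _ => posPart_nonneg (v x)
  -- Couple the positive and negative parts of `v`, which both have mass `c`.
  have hcoupling :
      ∀ y, c * (v ᵥ* A) y = ∑ x, ∑ x', (v x)⁺ * (v x')⁻ * (A x y - A x' y) := by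
    intro y
    rw [sum_sum_mul_mul_sub_eq (fun x => (v x)⁺) (fun x => (v x)⁻), hc, ← mul_sub,
      ← Pi.sub_apply, ← sub_vecMul]
    congr 3
    funext x
    exact (posPart_sub_negPart (v x)).symm
  have key : c * l1Norm (v ᵥ* A) ≤ c * (tauCoef A * l1Norm v) := calc
    c * l1Norm (v ᵥ* A) = ∑ y, |c * (v ᵥ* A) y| := by
      simp only [l1Norm, Finset.mul_sum, abs_mul, abs_of_nonneg hc0]
    _ ≤ ∑ y, ∑ x, ∑ x', (v x)⁺ * (v x')⁻ * |A x y - A x' y| := by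
      refine Finset.sum_le_sum fun y _ => ?_
      rw [hcoupling]
      refine (Finset.abs_sum_le_sum_abs _ _).trans (Finset.sum_le_sum fun x _ => ?_)
      refine (Finset.abs_sum_le_sum_abs _ _).trans_eq (Finset.sum_congr rfl fun x' _ => ?_)
      rw [abs_mul, abs_of_nonneg (mul_nonneg (posPart_nonneg _) (negPart_nonneg _))]
    _ = ∑ x, ∑ x', (v x)⁺ * (v x')⁻ * ∑ y, |A x y - A x' y| := by
      rw [Finset.sum_comm]
      simp only [Finset.mul_sum]
      exact Finset.sum_congr rfl fun _ _ => Finset.sum_comm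
    _ ≤ ∑ x, ∑ x', (v x)⁺ * (v x')⁻ * (2 * tauCoef A) := by
      gcongr with x _ x' _
      exact sum_abs_sub_le_two_mul_tauCoef A x x'
    _ = c * (tauCoef A * l1Norm v) := by
      simp only [← Finset.sum_mul, ← Finset.mul_sum, hc, hl1]
      ring
  rcases hc0.eq_or_lt with hczero | hcpos
  · have hv0 : v = 0 := by
      funext x
      have := (Finset.sum_eq_zero_iff_of_nonneg fun x _ => abs_nonneg (v x)).mp
        (by rw [← l1Norm, hl1, ← hczero, mul_zero]) x (Finset.mem_univ x)
      simpa using this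
    simp [hv0, l1Norm]
  · exact le_of_mul_le_mul_left key hcpos

end Dobrushin

section Perturbation

variable {S : Type*} [Fintype S]

lemma vecMul_pow_eq_self [DecidableEq S] {P : Matrix S S ℝ} {π : S → ℝ} (h : π ᵥ* P = π)
    (ℓ : ℕ) : π ᵥ* P ^ ℓ = π := by
  induction ℓ with
  | zero => simp
  | succ n ih => rw [pow_succ, ← vecMul_vecMul, ih, h]

theorem one_sub_tauCoef_mul_l1Norm_sub_le {A B : Matrix S S ℝ} {π₁ π₂ : S → ℝ}
    (h₁ : π₁ ᵥ* A = π₁) (h₂ : π₂ ᵥ* B = π₂) (hsum : ∑ x, π₁ x = ∑ x, π₂ x)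
    (hπ₂ : ∀ x, |π₂ x| ≤ 1) :
    (1 - tauCoef A) * l1Norm (π₁ - π₂) ≤ entrywiseL1Norm (A - B) := by
  have hdecomp : π₁ - π₂ = (π₁ - π₂) ᵥ* A + π₂ ᵥ* (A - B) := by
    rw [sub_vecMul, vecMul_sub, h₁, h₂]
    abel
  have hmass : ∑ x, (π₁ - π₂) x = 0 := by
    simp only [Pi.sub_apply, Finset.sum_sub_distrib, hsum, sub_self]
  have hbound : l1Norm (π₁ - π₂) ≤ tauCoef A * l1Norm (π₁ - π₂) + entrywiseL1Norm (A - B) :=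
    calc l1Norm (π₁ - π₂)
        = l1Norm ((π₁ - π₂) ᵥ* A + π₂ ᵥ* (A - B)) := congrArg l1Norm hdecomp
      _ ≤ l1Norm ((π₁ - π₂) ᵥ* A) + l1Norm (π₂ ᵥ* (A - B)) := l1Norm_add_le _ _
      _ ≤ tauCoef A * l1Norm (π₁ - π₂) + entrywiseL1Norm (A - B) :=
        add_le_add (l1Norm_vecMul_le_tauCoef_mul A hmass)
          (l1Norm_vecMul_le_entrywiseL1Norm hπ₂ _)
  linarith

end Perturbation

theorem stmt_15_general {S : Type*} [Fintype S] [DecidableEq S]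
    (P₁ P₂ : Matrix S S ℝ) (hs₁ : RowStochastic P₁) (hs₂ : RowStochastic P₂)
    (π₁ π₂ : S → ℝ)
    (hπ₁ : (∀ x, 0 ≤ π₁ x) ∧ (∑ x, π₁ x = 1) ∧ ∀ y, ∑ x, π₁ x * P₁ x y = π₁ y)
    (hπ₂ : (∀ x, 0 ≤ π₂ x) ∧ (∑ x, π₂ x = 1) ∧ ∀ y, ∑ x, π₂ x * P₂ x y = π₂ y)
    (ℓ₀ : ℕ) (hτ : tauCoef (P₁ ^ ℓ₀) < 1) :
    ∑ x, |π₁ x - π₂ x|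
      ≤ (1 + ((ℓ₀ : ℝ) - 1) * (Fintype.card S : ℝ)) / (1 - tauCoef (P₁ ^ ℓ₀))
        * ∑ x, ∑ y, |P₁ x y - P₂ x y| := by
  obtain ⟨-, hπ₁sum, hπ₁P⟩ := hπ₁
  obtain ⟨hπ₂nonneg, hπ₂sum, hπ₂P⟩ := hπ₂
  have hπ₂le : ∀ x, |π₂ x| ≤ 1 := fun x => by
    rw [abs_of_nonneg (hπ₂nonneg x), ← hπ₂sum]
    exact Finset.single_le_sum (fun y _ => hπ₂nonneg y) (Finset.mem_univ x)
  have hpert := one_sub_tauCoef_mul_l1Norm_sub_le (vecMul_pow_eq_self (funext hπ₁P) ℓ₀)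
    (vecMul_pow_eq_self (funext hπ₂P) ℓ₀) (hπ₁sum.trans hπ₂sum.symm) hπ₂le
  have htel : entrywiseL1Norm (P₁ ^ ℓ₀ - P₂ ^ ℓ₀)
      ≤ (1 + ((ℓ₀ : ℝ) - 1) * Fintype.card S) * entrywiseL1Norm (P₁ - P₂) := by
    cases ℓ₀ with
    | zero =>
      rw [pow_zero] at hτ
      have hcard : (Fintype.card S : ℝ) ≤ 1 := by
        exact_mod_cast card_le_one_of_tauCoef_one_lt_one hτ
      rw [pow_zero, pow_zero, sub_self]
      simp only [entrywiseL1Norm, l1Norm, Matrix.zero_apply, abs_zero, Finset.sum_const_zero]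
      exact mul_nonneg (by push_cast; linarith) (entrywiseL1Norm_nonneg _)
    | succ m => simpa using entrywiseL1Norm_pow_sub_pow_le hs₁ hs₂ m
  rw [div_mul_eq_mul_div, le_div_iff₀ (by linarith)]
  change l1Norm (π₁ - π₂) * _ ≤ _ * entrywiseL1Norm (P₁ - P₂)
  linarith

/-- For finite irreducible stochastic matrices `P₁, P₂` with stationary
distributions `π₁, π₂` and `τ(P₁^{ℓ₀}) < 1`,
`‖π₁ − π₂‖₁ ≤ (1 + (ℓ₀ − 1) n)/(1 − τ(P₁^{ℓ₀})) ‖P₁ − P₂‖₁`, `n` the number of states. -/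
theorem stmt_15 {S : Type*} [Fintype S] [DecidableEq S] [Nonempty S]
    (P₁ P₂ : Matrix S S ℝ) (hs₁ : RowStochastic P₁) (hs₂ : RowStochastic P₂)
    (hi₁ : MatIrreducible P₁) (hi₂ : MatIrreducible P₂)
    (π₁ π₂ : S → ℝ)
    (hπ₁ : (∀ x, 0 ≤ π₁ x) ∧ (∑ x, π₁ x = 1) ∧ ∀ y, ∑ x, π₁ x * P₁ x y = π₁ y)
    (hπ₂ : (∀ x, 0 ≤ π₂ x) ∧ (∑ x, π₂ x = 1) ∧ ∀ y, ∑ x, π₂ x * P₂ x y = π₂ y)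
    (ℓ₀ : ℕ) (hτ : tauCoef (P₁ ^ ℓ₀) < 1) :
    ∑ x, |π₁ x - π₂ x|
      ≤ (1 + ((ℓ₀ : ℝ) - 1) * (Fintype.card S : ℝ)) / (1 - tauCoef (P₁ ^ ℓ₀))
        * ∑ x, ∑ y, |P₁ x y - P₂ x y| :=
  stmt_15_general P₁ P₂ hs₁ hs₂ π₁ π₂ hπ₁ hπ₂ ℓ₀ hτ
end
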